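/- Let k ≥ 1 be an integer, C > 0 and α > 1 real numbers, set s₀ := 3C(k+1), and let T ≥ s₀. Let β : ℝ → ℝ be nonnegative and nondecreasing on [0,T] with β(s₀) ≥ 3C. Assume that for almost every s ∈ (s₀,T), whenever β is differentiable at s with derivative β′(s), one has β(s) ≤ 3C·β′(s)^{α}. Then for every s ∈ [s₀,T] one has β(s) ≥ 3C·{1 + ((α−1)/α)·[s/(3C) − (k+1)]}^{α/(α−1)}. -/

import Mathlib

/-!
Put `q = (α - 1) / α`. Where `β` is differentiable, `β ≤ 3C β'^α` gives
`(β^q)' = q β^(q-1) β' = q β^(-1/α) β' ≥ q (3C)^(-1/α)`, and a monotone function is differentiable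
almost everywhere. The increment of the monotone function `β^q` dominates the integral of its
derivative, so `β^q` grows at least linearly from `β(s₀)^q ≥ (3C)^q`; taking `1/q`-th powers
gives the bound.
-/

open MeasureTheory Set

theorem MonotoneOn.ae_differentiableAt_of_isOpen {f : ℝ → ℝ} {s : Set ℝ} (hf : MonotoneOn f s)
    (hs : IsOpen s) : ∀ᵐ x, x ∈ s → DifferentiableAt ℝ f x := by
  have h := hf.ae_differentiableWithinAt hs.measurableSet
  rw [ae_restrict_iff' hs.measurableSet] at h
  filter_upwards [h] with x hx hxs using (hx hxs).differentiableAt (hs.mem_nhds hxs)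

theorem MonotoneOn.deriv_nonneg_of_isOpen {f : ℝ → ℝ} {s : Set ℝ} {x : ℝ} (hf : MonotoneOn f s)
    (hs : IsOpen s) (hx : x ∈ s) : 0 ≤ deriv f x := by
  rw [← derivWithin_of_isOpen hs hx]
  exact hf.derivWithin_nonneg

theorem MonotoneOn.mul_sub_le_image_sub_of_le_deriv_ae {f : ℝ → ℝ} {a b c : ℝ} (hab : a ≤ b)
    (hf : MonotoneOn f (Icc a b)) (hc : ∀ᵐ x, x ∈ Ioo a b → c ≤ deriv f x) :
    c * (b - a) ≤ f b - f a := by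
  have hfab : 0 ≤ f b - f a := sub_nonneg.2 (hf (left_mem_Icc.2 hab) (right_mem_Icc.2 hab) hab)
  rw [← uIcc_of_le hab] at hf
  calc c * (b - a) = ∫ _ in a..b, c := by simp [mul_comm]
    _ ≤ ∫ x in a..b, deriv f x := by
      refine intervalIntegral.integral_mono_ae_restrict hab intervalIntegrable_const
        hf.intervalIntegrable_deriv ?_
      rwa [← restrict_Ioo_eq_restrict_Icc, Filter.EventuallyLE,
        ae_restrict_iff' measurableSet_Ioo]
    _ ≤ f b - f a := by
      have h := hf.intervalIntegral_deriv_mem_uIcc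
      rw [uIcc_of_le hfab] at h
      exact h.2

theorem le_deriv_rpow_of_le_mul_deriv_rpow {f : ℝ → ℝ} {x K α : ℝ} (hK : 0 < K) (hα : 1 ≤ α)
    (hf : DifferentiableAt ℝ f x) (hfx : 0 < f x) (hd : 0 ≤ deriv f x)
    (hode : f x ≤ K * deriv f x ^ α) :
    (α - 1) / α * K ^ (-α⁻¹) ≤ deriv (fun t => f t ^ ((α - 1) / α)) x := by
  have hα0 : 0 < α := by linarith
  have hq : 0 ≤ (α - 1) / α := div_nonneg (by linarith) hα0.le
  have hq1 : (α - 1) / α - 1 = -α⁻¹ := by field_simp; ring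
  have hroot : (f x / K) ^ α⁻¹ ≤ deriv f x :=
    (Real.rpow_inv_le_iff_of_pos (by positivity) hd hα0).2 (by rw [div_le_iff₀ hK]; linarith)
  have hK_eq : K ^ (-α⁻¹) = f x ^ (-α⁻¹) * (f x / K) ^ α⁻¹ := by
    rw [Real.div_rpow hfx.le hK.le, Real.rpow_neg hfx.le, Real.rpow_neg hK.le]
    field_simp
  rw [(hf.hasDerivAt.rpow_const (Or.inl hfx.ne')).deriv, hq1, hK_eq]
  calc (α - 1) / α * (f x ^ (-α⁻¹) * (f x / K) ^ α⁻¹)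
      ≤ (α - 1) / α * (f x ^ (-α⁻¹) * deriv f x) := by gcongr
    _ = deriv f x * ((α - 1) / α) * f x ^ (-α⁻¹) := by ring

theorem MonotoneOn.mul_sub_le_rpow_sub_of_le_mul_rpow_deriv {β : ℝ → ℝ} {a b K α : ℝ}
    (hab : a ≤ b) (hK : 0 < K) (hα : 1 ≤ α) (hβ : MonotoneOn β (Icc a b)) (ha : K ≤ β a)
    (hode : ∀ᵐ x, x ∈ Ioo a b → ∀ d, HasDerivAt β d x → β x ≤ K * d ^ α) :
    (α - 1) / α * K ^ (-α⁻¹) * (b - a) ≤ β b ^ ((α - 1) / α) - β a ^ ((α - 1) / α) := by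
  have hlower : ∀ x ∈ Icc a b, K ≤ β x := fun x hx => ha.trans (hβ (left_mem_Icc.2 hab) hx hx.1)
  have hG : MonotoneOn (fun x => β x ^ ((α - 1) / α)) (Icc a b) := fun x hx y hy hxy =>
    Real.rpow_le_rpow (hK.le.trans (hlower x hx)) (hβ hx hy hxy)
      (div_nonneg (by linarith) (by linarith))
  refine hG.mul_sub_le_image_sub_of_le_deriv_ae hab ?_
  have hβIoo : MonotoneOn β (Ioo a b) := hβ.mono Ioo_subset_Icc_self
  filter_upwards [hβIoo.ae_differentiableAt_of_isOpen isOpen_Ioo, hode] with x hdiff hode hx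
  exact le_deriv_rpow_of_le_mul_deriv_rpow hK hα (hdiff hx)
    (hK.trans_le (hlower x (Ioo_subset_Icc_self hx)))
    (hβIoo.deriv_nonneg_of_isOpen isOpen_Ioo hx) (hode hx _ (hdiff hx).hasDerivAt)

theorem growth_estimate_superpolynomial_general (k : ℕ) (C α : ℝ) (hC : 0 < C)
    (hα : 1 < α) (T : ℝ) (β : ℝ → ℝ)
    (hmono : MonotoneOn β (Set.Icc (0:ℝ) T))
    (hβs₀ : 3 * C ≤ β (3 * C * ((k : ℝ) + 1)))
    (hae : ∀ᵐ s ∂volume, s ∈ Set.Ioo (3 * C * ((k : ℝ) + 1)) T → ∀ d : ℝ, HasDerivAt β d s →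
      β s ≤ 3 * C * d ^ α) :
    ∀ s ∈ Set.Icc (3 * C * ((k : ℝ) + 1)) T,
      3 * C * (1 + (α - 1) / α * (s / (3 * C) - ((k : ℝ) + 1))) ^ (α / (α - 1)) ≤ β s := by
  intro s hs
  set s₀ := 3 * C * ((k : ℝ) + 1)
  set q := (α - 1) / α
  set X := 1 + q * (s / (3 * C) - ((k : ℝ) + 1))
  have h3C : 0 < 3 * C := by positivity
  have hq : 0 < q := div_pos (by linarith) (by linarith)
  have hmono_s : MonotoneOn β (Icc s₀ s) := hmono.mono (Icc_subset_Icc (by positivity) hs.2)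
  have hgrowth := hmono_s.mul_sub_le_rpow_sub_of_le_mul_rpow_deriv hs.1 h3C hα.le hβs₀ <| by
    filter_upwards [hae] with x hx hxs using hx ⟨hxs.1, hxs.2.trans_le hs.2⟩
  have hs_sub : s - s₀ = 3 * C * (s / (3 * C) - ((k : ℝ) + 1)) := by field_simp; ring
  have hX : 0 ≤ X :=
    add_nonneg zero_le_one (mul_nonneg hq.le (sub_nonneg.2 ((le_div_iff₀' h3C).2 hs.1)))
  have hβs : (3 * C) ^ q * X ≤ β s ^ q := by
    have h0 := Real.rpow_le_rpow h3C.le hβs₀ hq.le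
    have hpow : (3 * C) ^ q = (3 * C) ^ (-α⁻¹) * (3 * C) := by
      rw [← Real.rpow_add_one h3C.ne']; congr 1; simp only [q]; field_simp; ring
    rw [hpow] at h0 ⊢
    rw [hs_sub] at hgrowth
    linear_combination h0 + hgrowth
  have hβs_nonneg : 0 ≤ β s :=
    h3C.le.trans (hβs₀.trans (hmono_s (left_mem_Icc.2 hs.1) (right_mem_Icc.2 hs.1) hs.1))
  rw [show α / (α - 1) = q⁻¹ from (inv_div _ _).symm,
    ← Real.rpow_le_rpow_iff (by positivity) hβs_nonneg hq,
    Real.mul_rpow (by positivity) (by positivity), ← Real.rpow_mul hX, inv_mul_cancel₀ hq.ne',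
    Real.rpow_one]
  exact hβs

/-- **Superpolynomial growth estimate (Lemma 3.1 of the paper, power `α > 1`).**
Let `k ≥ 1`, `C > 0`, `α > 1`, set `s₀ := 3C(k+1)`, and let `T ≥ s₀`.  Let `β : ℝ → ℝ` be
nonnegative and nondecreasing on `[0,T]` with `β(s₀) ≥ 3C`.  If for almost every `s ∈ (s₀,T)`,
whenever `β` is differentiable at `s` with derivative `β′(s)`, one has `β(s) ≤ 3C·β′(s)^α`,
then for every `s ∈ [s₀,T]`,
`β(s) ≥ 3C·(1 + ((α−1)/α)·(s/(3C) − (k+1)))^(α/(α−1))`. -/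
theorem growth_estimate_superpolynomial (k : ℕ) (hk : 1 ≤ k) (C α : ℝ) (hC : 0 < C)
    (hα : 1 < α) (T : ℝ) (hT : 3 * C * ((k : ℝ) + 1) ≤ T) (β : ℝ → ℝ)
    (hnonneg : ∀ s ∈ Set.Icc (0:ℝ) T, 0 ≤ β s)
    (hmono : MonotoneOn β (Set.Icc (0:ℝ) T))
    (hβs₀ : 3 * C ≤ β (3 * C * ((k : ℝ) + 1)))
    (hae : ∀ᵐ s ∂volume, s ∈ Set.Ioo (3 * C * ((k : ℝ) + 1)) T → ∀ d : ℝ, HasDerivAt β d s →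
      β s ≤ 3 * C * d ^ α) :
    ∀ s ∈ Set.Icc (3 * C * ((k : ℝ) + 1)) T,
      3 * C * (1 + (α - 1) / α * (s / (3 * C) - ((k : ℝ) + 1))) ^ (α / (α - 1)) ≤ β s :=
  growth_estimate_superpolynomial_general k C α hC hα T β hmono hβs₀ hae
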